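/- arXiv:2501.14686 — 3 statements merged into one kernel-verified Lean document; each statement's English description precedes it below -/
import Mathlib

section
/- Let a0 ≤ a1 be reals, let s ∈ ℝ, and let Ψ : [a0,a1] → Set ℝ be a correspondence with nonempty convex values and compact graph. If there exist s0 ∈ Ψ(a0) and s1 ∈ Ψ(a1) with s0 ≤ s ≤ s1, then there exists a ∈ [a0,a1] with s ∈ Ψ(a). -/
/-!
Split the domain according to whether the correspondence has a value `≤ s` or a value `≥ s`.
Both parts are projections of compact pieces of the graph, hence closed; they cover the
domain, and each contains one endpoint, so by connectedness some point lies in both. Since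
the values there are order-connected, they contain `s`.
-/

open Set

section Correspondence

variable {X Y : Type*} [TopologicalSpace X] [TopologicalSpace Y]

lemma isClosed_setOf_inter_nonempty_of_isCompact_graph [T2Space X] {S : Set X}
    {Ψ : X → Set Y} (hG : IsCompact {p : X × Y | p.1 ∈ S ∧ p.2 ∈ Ψ p.1}) {T : Set Y}
    (hT : IsClosed T) : IsClosed {a | a ∈ S ∧ (Ψ a ∩ T).Nonempty} := by
  have hproj : {a | a ∈ S ∧ (Ψ a ∩ T).Nonempty} =
      Prod.fst '' ({p : X × Y | p.1 ∈ S ∧ p.2 ∈ Ψ p.1} ∩ Prod.snd ⁻¹' T) := by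
    ext a
    constructor
    · rintro ⟨ha, t, htΨ, htT⟩
      exact ⟨(a, t), ⟨⟨ha, htΨ⟩, htT⟩, rfl⟩
    · rintro ⟨⟨a, t⟩, ⟨⟨ha, htΨ⟩, htT⟩, rfl⟩
      exact ⟨ha, t, htΨ, htT⟩
  rw [hproj]
  exact ((hG.inter_right (hT.preimage continuous_snd)).image continuous_fst).isClosed

theorem IsPreconnected.exists_mem_of_isCompact_graph [T2Space X] [LinearOrder Y]
    [OrderClosedTopology Y] {S : Set X} (hS : IsPreconnected S) {Ψ : X → Set Y}
    (hG : IsCompact {p : X × Y | p.1 ∈ S ∧ p.2 ∈ Ψ p.1})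
    (hne : ∀ a ∈ S, (Ψ a).Nonempty) (hconn : ∀ a ∈ S, (Ψ a).OrdConnected)
    {a0 a1 : X} (ha0 : a0 ∈ S) (ha1 : a1 ∈ S) {s s0 s1 : Y}
    (hs0 : s0 ∈ Ψ a0) (hs1 : s1 ∈ Ψ a1) (h0 : s0 ≤ s) (h1 : s ≤ s1) :
    ∃ a ∈ S, s ∈ Ψ a := by
  have hcover : S ⊆ {a | a ∈ S ∧ (Ψ a ∩ Iic s).Nonempty} ∪
      {a | a ∈ S ∧ (Ψ a ∩ Ici s).Nonempty} := by
    intro a ha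
    obtain ⟨t, ht⟩ := hne a ha
    rcases le_total t s with hts | hst
    · exact Or.inl ⟨ha, t, ht, hts⟩
    · exact Or.inr ⟨ha, t, ht, hst⟩
  obtain ⟨a, -, ⟨ha, t, htΨ, hts⟩, -, t', ht'Ψ, hst'⟩ :=
    isPreconnected_closed_iff.mp hS _ _
      (isClosed_setOf_inter_nonempty_of_isCompact_graph hG isClosed_Iic)
      (isClosed_setOf_inter_nonempty_of_isCompact_graph hG isClosed_Ici) hcover
      ⟨a0, ha0, ha0, s0, hs0, h0⟩ ⟨a1, ha1, ha1, s1, hs1, h1⟩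
  exact ⟨a, ha, (hconn a ha).out htΨ ht'Ψ ⟨hts, hst'⟩⟩

end Correspondence

theorem stmt9 (a0 a1 s s0 s1 : ℝ) (h01 : a0 ≤ a1)
    (Ψ : ℝ → Set ℝ)
    (hne : ∀ a ∈ Set.Icc a0 a1, (Ψ a).Nonempty)
    (hconv : ∀ a ∈ Set.Icc a0 a1, Convex ℝ (Ψ a))
    (hgraph : IsCompact {p : ℝ × ℝ | p.1 ∈ Set.Icc a0 a1 ∧ p.2 ∈ Ψ p.1})
    (hs0 : s0 ∈ Ψ a0) (hs1 : s1 ∈ Ψ a1) (h0 : s0 ≤ s) (h1 : s ≤ s1) :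
    ∃ a ∈ Set.Icc a0 a1, s ∈ Ψ a :=
  isPreconnected_Icc.exists_mem_of_isCompact_graph hgraph hne
    (fun a ha ↦ (hconv a ha).ordConnected) (left_mem_Icc.mpr h01) (right_mem_Icc.mpr h01)
    hs0 hs1 h0 h1
end

section
/- Let c_A : [0,1] → ℝ be thrice differentiable, strictly increasing, strictly convex with c_A(0) = c_A'(0) = 0, define u(e) = e·c_A'(e) − c_A(e), and let K > 0 be a constant such that K + e > e(1−e)·u''(e)/u'(e) holds for all e ∈ (0,1] (with u'(e) = e·c_A''(e) > 0). Then for every constant μ with 0 < μ ≤ 1/K, the function e ↦ −c_A'(e) + (1−e)·μ·u'(e) is strictly decreasing on [0,1]. -/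
theorem stmt13 (cA u : ℝ → ℝ) (K : ℝ)
    (hd : ContDiff ℝ 3 cA)
    (hmono : StrictMonoOn cA (Set.Icc (0:ℝ) 1))
    (hconv : StrictConvexOn ℝ (Set.Icc (0:ℝ) 1) cA)
    (hc0 : cA 0 = 0) (hc'0 : deriv cA 0 = 0)
    (hu : ∀ e, u e = e * deriv cA e - cA e)
    (hu' : ∀ e ∈ Set.Ioc (0:ℝ) 1,
      deriv u e = e * deriv (deriv cA) e ∧ 0 < deriv u e)
    (hK : 0 < K)
    (hass : ∀ e ∈ Set.Ioc (0:ℝ) 1,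
      K + e > e * (1 - e) * deriv (deriv u) e / deriv u e) :
    ∀ μ : ℝ, 0 < μ → μ ≤ 1 / K →
      StrictAntiOn (fun e => -deriv cA e + (1 - e) * μ * deriv u e)
        (Set.Icc (0:ℝ) 1) := by
  intro μ hμ hμK
  -- regularity facts
  have h2 : ContDiff ℝ 2 (deriv cA) :=
    (contDiff_succ_iff_deriv.mp (show ContDiff ℝ (2+1) cA from hd)).2.2
  have h1 : ContDiff ℝ 1 (deriv (deriv cA)) :=
    (contDiff_succ_iff_deriv.mp (show ContDiff ℝ (1+1) (deriv cA) from h2)).2.2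
  have hdA : Differentiable ℝ (deriv cA) := h2.differentiable two_ne_zero
  have hdA2 : Differentiable ℝ (deriv (deriv cA)) := h1.differentiable one_ne_zero
  have hufun : u = fun e => e * deriv cA e - cA e := funext hu
  have hderu : deriv u = fun e => e * deriv (deriv cA) e := by
    funext e
    rw [hufun]
    have h1' : HasDerivAt (fun e : ℝ => e * deriv cA e - cA e)
        (1 * deriv cA e + e * deriv (deriv cA) e - deriv cA e) e := by
      exact ((hasDerivAt_id e).mul (hdA e).hasDerivAt).sub
        ((hd.differentiable (by norm_num) e).hasDerivAt)
    have := h1'.deriv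
    rw [this]; ring
  have hdu' : Differentiable ℝ (deriv u) := by
    rw [hderu]; exact differentiable_id.mul hdA2
  have hμK' : μ * K ≤ 1 := by
    rw [le_div_iff₀ hK] at hμK; linarith
  apply strictAntiOn_of_deriv_neg (convex_Icc 0 1)
  · exact (((hdA.neg).add
      (((differentiable_const (1:ℝ)).sub differentiable_id).mul_const μ |>.mul hdu')).continuous).continuousOn
  · intro x hx
    rw [interior_Icc] at hx
    obtain ⟨hx0, hx1⟩ := hx
    have hxIoc : x ∈ Set.Ioc (0:ℝ) 1 := ⟨hx0, le_of_lt hx1⟩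
    obtain ⟨hp, hppos⟩ := hu' x hxIoc
    have hq := hass x hxIoc
    set a := deriv (deriv cA) x with ha
    set p := deriv u x with hpd
    set q := deriv (deriv u) x with hqd
    -- compute the derivative
    have hder : HasDerivAt (fun e => -deriv cA e + (1 - e) * μ * deriv u e)
        (-a + (((0 - 1) * μ) * p + ((1 - x) * μ) * q)) x := by
      have hgm : HasDerivAt (fun e : ℝ => (1 - e) * μ) ((0 - 1) * μ) x :=
        ((hasDerivAt_const x (1:ℝ)).sub (hasDerivAt_id x)).mul_const μ
      exact ((hdA x).hasDerivAt.neg).add (hgm.mul (hdu' x).hasDerivAt)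
    rw [hder.deriv]
    -- the inequality
    have hpa : p = x * a := hp
    have hapos : 0 < a := by
      nlinarith
    have hq' : x * (1 - x) * q < (K + x) * p := by
      rw [gt_iff_lt, div_lt_iff₀ hppos] at hq
      linarith
    rcases le_or_gt ((1 - x) * q) p with hc | hc
    · nlinarith
    · nlinarith [mul_pos hμ (sub_pos.mpr hc), mul_pos hx0 (sub_pos.mpr hc),
        mul_le_mul_of_nonneg_right hμK' (le_of_lt (mul_pos hx0 (sub_pos.mpr hc)))]
end

section
/- Let F be a Borel probability measure on [x̲, x̄] with no atom at x̄ and with x̄ in its support, and let k > 0. For ε ∈ (0, x̄ − x̲) define G(ε) = ∫ (min{x, x̄} − min{x, x̄ − ε} − k·1_{[x̄−ε, x̄)}(x)) dF(x). Then G(ε) ≤ (ε − k)·(1 − F(x̄ − ε)) for all ε, and there exists ε > 0 with G(ε) < 0. -/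
open MeasureTheory Set

/-- Repayment lost on type `x` when the face value drops from `b` to `b - ε`, minus the audit
cost `k` saved on the types in `[b - ε, b)`. -/
noncomputable def faceValueCutGain (b ε k x : ℝ) : ℝ :=
  min x b - min x (b - ε) - k * (Ico (b - ε) b).indicator (fun _ => (1 : ℝ)) x

lemma faceValueCutGain_le_indicator {b ε k x : ℝ} (hx : x < b) :
    faceValueCutGain b ε k x ≤ (Icc (b - ε) b).indicator (fun _ => ε - k) x := by
  unfold faceValueCutGain
  rcases lt_or_ge x (b - ε) with hlow | hhigh
  · have hIco : x ∉ Ico (b - ε) b := fun h => h.1.not_gt hlow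
    have hIcc : x ∉ Icc (b - ε) b := fun h => h.1.not_gt hlow
    simp only [indicator_of_notMem hIco, indicator_of_notMem hIcc, min_eq_left hx.le,
      min_eq_left hlow.le]
    simp
  · simp only [indicator_of_mem (show x ∈ Ico (b - ε) b from ⟨hhigh, hx⟩),
      indicator_of_mem (show x ∈ Icc (b - ε) b from ⟨hhigh, hx.le⟩), min_eq_left hx.le,
      min_eq_right hhigh]
    linarith

lemma integrable_faceValueCutGain (μ : Measure ℝ) [IsFiniteMeasure μ] (b ε k : ℝ) :
    Integrable (faceValueCutGain b ε k) μ := by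
  have hrevenue : Integrable (fun x => min x b - min x (b - ε)) μ := by
    refine Integrable.of_bound (by fun_prop) |ε| (ae_of_all _ fun x => ?_)
    simpa using abs_min_sub_min_le_max x b x (b - ε)
  exact hrevenue.sub (((integrable_const (1 : ℝ)).indicator measurableSet_Ico).const_mul k)

lemma ae_lt_of_measure_Icc_eq_one {μ : Measure ℝ} [IsProbabilityMeasure μ] {a b : ℝ}
    (hconc : μ (Icc a b) = 1) (hatom : μ {b} = 0) : ∀ᵐ x ∂μ, x < b := by
  have hIcc : ∀ᵐ x ∂μ, x ∈ Icc a b :=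
    (prob_compl_eq_zero_iff measurableSet_Icc).2 hconc
  have hne : ∀ᵐ x ∂μ, x ≠ b := compl_mem_ae_iff.2 hatom
  filter_upwards [hIcc, hne] with x hx hxb
  exact lt_of_le_of_ne hx.2 hxb

lemma integral_faceValueCutGain_le {μ : Measure ℝ} [IsFiniteMeasure μ] {b : ℝ}
    (hlt : ∀ᵐ x ∂μ, x < b) (ε k : ℝ) :
    ∫ x, faceValueCutGain b ε k x ∂μ ≤ (ε - k) * μ.real (Icc (b - ε) b) := by
  calc ∫ x, faceValueCutGain b ε k x ∂μ
      ≤ ∫ x, (Icc (b - ε) b).indicator (fun _ => ε - k) x ∂μ :=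
        integral_mono_ae (integrable_faceValueCutGain μ b ε k)
          ((integrable_const _).indicator measurableSet_Icc)
          (hlt.mono fun _ => faceValueCutGain_le_indicator)
    _ = (ε - k) * μ.real (Icc (b - ε) b) := by
        rw [integral_indicator_const _ measurableSet_Icc, smul_eq_mul, mul_comm]

theorem stmt17 (xlow xbar k : ℝ) (hx : xlow < xbar) (hk : 0 < k)
    (μ : Measure ℝ) [IsProbabilityMeasure μ]
    (hconc : μ (Set.Icc xlow xbar) = 1)
    (hatom : μ {xbar} = 0)
    (hsupp : ∀ ε > 0, 0 < μ (Set.Ioc (xbar - ε) xbar))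
    (G : ℝ → ℝ)
    (hG : ∀ ε ∈ Set.Ioo 0 (xbar - xlow),
      G ε = ∫ x, (min x xbar - min x (xbar - ε)
        - k * Set.indicator (Set.Ico (xbar - ε) xbar) (fun _ => (1:ℝ)) x) ∂μ) :
    (∀ ε ∈ Set.Ioo 0 (xbar - xlow),
      G ε ≤ (ε - k) * (μ (Set.Icc (xbar - ε) xbar)).toReal) ∧
    ∃ ε ∈ Set.Ioo 0 (xbar - xlow), G ε < 0 := by
  have hbound : ∀ ε ∈ Ioo 0 (xbar - xlow), G ε ≤ (ε - k) * (μ (Icc (xbar - ε) xbar)).toReal :=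
    fun ε hε => (hG ε hε).trans_le
      (integral_faceValueCutGain_le (ae_lt_of_measure_Icc_eq_one hconc hatom) ε k)
  refine ⟨hbound, ?_⟩
  set ε := min k (xbar - xlow) / 2
  have hmin : 0 < min k (xbar - xlow) := lt_min hk (sub_pos.2 hx)
  have hε : ε ∈ Ioo 0 (xbar - xlow) :=
    ⟨half_pos hmin, (half_lt_self hmin).trans_le (min_le_right _ _)⟩
  have hεk : ε < k := (half_lt_self hmin).trans_le (min_le_left _ _)
  have hmass : 0 < (μ (Icc (xbar - ε) xbar)).toReal :=
    ENNReal.toReal_pos ((hsupp ε hε.1).trans_le (measure_mono Ioc_subset_Icc_self)).ne'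
      (measure_ne_top μ _)
  exact ⟨ε, hε, (hbound ε hε).trans_lt (mul_neg_of_neg_of_pos (sub_neg.2 hεk) hmass)⟩
end
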